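/- Fix reals λ > 0, β > 0, T > 0 and an integer N ≥ 2, and for each ε > 0 define z_1(ε), z_2(ε), γ_1(ε), γ_2(ε), ρ_−(ε) by D(ε) = √((N−1)²λ² + 4βε(N+1)λ + 4β²ε²), z_1 = (−λ(N−1) + D)/(2ε), z_2 = (−λ(N−1) − D)/(2ε), γ_1 = 1/(z_1+β) + e^{z_1T}/(z_1−β), γ_2 = 1/(z_2+β) + e^{z_2T}/(z_2−β), ρ_− = e^{z_1T}/(z_1−β) − (γ_1/γ_2)e^{z_2T}/(z_2−β), and set 𝔤^ε(t) = 1 − (βρ_− t + (e^{z_1 t} − 1)/z_1 − (γ_1/γ_2)(e^{z_2 t} − 1)/z_2) / (βρ_− T + (e^{z_1 T} − 1)/z_1 − (γ_1/γ_2)(e^{z_2 T} − 1)/z_2). Set θ = β(N+1)T/(N−1) and define 𝕘 : [0,T] → ℝ by 𝕘(t) = 1 − (N(βt+1)(N+1)e^{θ} + 2N e^{β(N+1)t/(N−1)} − (N−1)) / (N((βT+1)(N+1)+2)e^{θ} − (N−1)). Then for every t ∈ (0,T], 𝔤^ε(t) → 𝕘(t) as ε → 0⁺; 𝔤^ε(0)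 = 1 for every ε > 0; and the convergence is uniform on compact subsets of (0,T). -/

import Mathlib

open Filter Topology

/-- `D(ε) = √((N−1)²λ² + 4βε(N+1)λ + 4β²ε²)`. -/
noncomputable def DEps (N : ℕ) (lam β ε : ℝ) : ℝ :=
  Real.sqrt (((N : ℝ) - 1) ^ 2 * lam ^ 2 + 4 * β * ε * ((N : ℝ) + 1) * lam
    + 4 * β ^ 2 * ε ^ 2)

/-- `z_1(ε) = (−λ(N−1) + D(ε))/(2ε)`. -/
noncomputable def z1Eps (N : ℕ) (lam β ε : ℝ) : ℝ :=
  (-(lam * ((N : ℝ) - 1)) + DEps N lam β ε) / (2 * ε)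

/-- `z_2(ε) = (−λ(N−1) − D(ε))/(2ε)`. -/
noncomputable def z2Eps (N : ℕ) (lam β ε : ℝ) : ℝ :=
  (-(lam * ((N : ℝ) - 1)) - DEps N lam β ε) / (2 * ε)

/-- `γ_1(ε) = 1/(z_1+β) + e^{z_1 T}/(z_1−β)`. -/
noncomputable def gamma1Eps (N : ℕ) (lam β T ε : ℝ) : ℝ :=
  1 / (z1Eps N lam β ε + β) + Real.exp (z1Eps N lam β ε * T) / (z1Eps N lam β ε - β)

/-- `γ_2(ε) = 1/(z_2+β) + e^{z_2 T}/(z_2−β)`. -/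
noncomputable def gamma2Eps (N : ℕ) (lam β T ε : ℝ) : ℝ :=
  1 / (z2Eps N lam β ε + β) + Real.exp (z2Eps N lam β ε * T) / (z2Eps N lam β ε - β)

/-- `ρ_−(ε) = e^{z_1T}/(z_1−β) − (γ_1/γ_2)e^{z_2T}/(z_2−β)`. -/
noncomputable def rhoMinusEps (N : ℕ) (lam β T ε : ℝ) : ℝ :=
  Real.exp (z1Eps N lam β ε * T) / (z1Eps N lam β ε - β)
    - gamma1Eps N lam β T ε / gamma2Eps N lam β T ε
      * (Real.exp (z2Eps N lam β ε * T) / (z2Eps N lam β ε - β))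

/-- The mean-inventory component `𝔤^ε` of the equilibrium with instantaneous cost `ε`
and liquidation constraint. -/
noncomputable def gMean (N : ℕ) (lam β T : ℝ) (ε t : ℝ) : ℝ :=
  1 - (β * rhoMinusEps N lam β T ε * t
        + (Real.exp (z1Eps N lam β ε * t) - 1) / z1Eps N lam β ε
        - gamma1Eps N lam β T ε / gamma2Eps N lam β T ε
          * ((Real.exp (z2Eps N lam β ε * t) - 1) / z2Eps N lam β ε)) /
      (β * rhoMinusEps N lam β T ε * T
        + (Real.exp (z1Eps N lam β ε * T) - 1) / z1Eps N lam β ε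
        - gamma1Eps N lam β T ε / gamma2Eps N lam β T ε
          * ((Real.exp (z2Eps N lam β ε * T) - 1) / z2Eps N lam β ε))

/-- The mean-inventory component `𝕘` of the equilibrium in the limiting block-cost model. -/
noncomputable def gBlock (N : ℕ) (β T : ℝ) (t : ℝ) : ℝ :=
  1 - ((N : ℝ) * (β * t + 1) * ((N : ℝ) + 1)
        * Real.exp (β * ((N : ℝ) + 1) * T / ((N : ℝ) - 1))
      + 2 * (N : ℝ) * Real.exp (β * ((N : ℝ) + 1) * t / ((N : ℝ) - 1)) - ((N : ℝ) - 1)) /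
    ((N : ℝ) * ((β * T + 1) * ((N : ℝ) + 1) + 2)
        * Real.exp (β * ((N : ℝ) + 1) * T / ((N : ℝ) - 1)) - ((N : ℝ) - 1))

section Aux

variable (N : ℕ) (lam β T : ℝ)

/-- The limit of `z1` as `ε → 0⁺`. -/
noncomputable def cLim : ℝ := β * ((N : ℝ) + 1) / ((N : ℝ) - 1)

variable {N lam β T}
variable (hN : 2 ≤ N) (hlam : 0 < lam) (hβ : 0 < β) (hT : 0 < T)

section
include hN

lemma hNR : (1 : ℝ) ≤ (N : ℝ) - 1 := by
  have : (2 : ℝ) ≤ (N : ℝ) := by exact_mod_cast hN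
  linarith

include hβ

lemma cLim_pos : 0 < cLim N β := by
  have h1 := hNR hN
  have h2 : (0:ℝ) < (N:ℝ) + 1 := by linarith
  exact div_pos (by positivity) (by linarith)

lemma cLim_sub_pos : 0 < cLim N β - β := by
  have h1 := hNR hN
  rw [cLim, sub_pos, lt_div_iff₀ (by linarith)]
  nlinarith

lemma cLim_add_pos : 0 < cLim N β + β := by
  have := cLim_pos hN hβ; linarith

end

section
include hlam hβ

lemma DEps_sq {ε : ℝ} (hε : 0 ≤ ε) :
    (DEps N lam β ε) ^ 2 = ((N : ℝ) - 1) ^ 2 * lam ^ 2 + 4 * β * ε * ((N : ℝ) + 1) * lam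
      + 4 * β ^ 2 * ε ^ 2 := by
  rw [DEps, Real.sq_sqrt]
  positivity

include hN

lemma tendsto_DEps :
    Tendsto (fun ε => DEps N lam β ε) (𝓝[>] 0) (𝓝 (lam * ((N : ℝ) - 1))) := by
  have h1 := hNR hN
  have hc : Tendsto (fun ε : ℝ => ((N : ℝ) - 1) ^ 2 * lam ^ 2 + 4 * β * ε * ((N : ℝ) + 1) * lam
      + 4 * β ^ 2 * ε ^ 2) (𝓝 0) (𝓝 (((N : ℝ) - 1) ^ 2 * lam ^ 2)) := by
    have := (Continuous.tendsto (by continuity :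
      Continuous (fun ε : ℝ => ((N : ℝ) - 1) ^ 2 * lam ^ 2 + 4 * β * ε * ((N : ℝ) + 1) * lam
      + 4 * β ^ 2 * ε ^ 2))) 0
    simpa using this
  have h2 : Tendsto (fun ε => DEps N lam β ε) (𝓝 0)
      (𝓝 (Real.sqrt (((N : ℝ) - 1) ^ 2 * lam ^ 2))) :=
    (Real.continuous_sqrt.tendsto _).comp hc
  have h3 : Real.sqrt (((N : ℝ) - 1) ^ 2 * lam ^ 2) = lam * ((N : ℝ) - 1) := by
    rw [show ((N : ℝ) - 1) ^ 2 * lam ^ 2 = (lam * ((N : ℝ) - 1)) ^ 2 by ring]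
    exact Real.sqrt_sq (by nlinarith)
  rw [h3] at h2
  exact h2.mono_left nhdsWithin_le_nhds

lemma z1_eq {ε : ℝ} (hε : 0 < ε) :
    z1Eps N lam β ε
      = (2 * β * ((N : ℝ) + 1) * lam + 2 * β ^ 2 * ε) / (DEps N lam β ε + lam * ((N : ℝ) - 1)) := by
  have h1 := hNR hN
  have hD0 : 0 ≤ DEps N lam β ε := Real.sqrt_nonneg _
  have hden : 0 < DEps N lam β ε + lam * ((N : ℝ) - 1) := by nlinarith
  have hD2 := DEps_sq (N := N) hlam hβ (le_of_lt hε)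
  rw [z1Eps, div_eq_div_iff (by positivity : (0:ℝ) < 2 * ε).ne' hden.ne']
  linear_combination hD2

lemma tendsto_z1 :
    Tendsto (fun ε => z1Eps N lam β ε) (𝓝[>] 0) (𝓝 (cLim N β)) := by
  have h1 := hNR hN
  have hnum : Tendsto (fun ε : ℝ => 2 * β * ((N : ℝ) + 1) * lam + 2 * β ^ 2 * ε) (𝓝[>] 0)
      (𝓝 (2 * β * ((N : ℝ) + 1) * lam)) := by
    have := (Continuous.tendsto (by continuity :
      Continuous (fun ε : ℝ => 2 * β * ((N : ℝ) + 1) * lam + 2 * β ^ 2 * ε)) 0).mono_left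
      (nhdsWithin_le_nhds (s := Set.Ioi (0:ℝ)))
    simpa using this
  have hden : Tendsto (fun ε => DEps N lam β ε + lam * ((N : ℝ) - 1)) (𝓝[>] 0)
      (𝓝 (lam * ((N : ℝ) - 1) + lam * ((N : ℝ) - 1))) :=
    (tendsto_DEps hN hlam hβ).add tendsto_const_nhds
  have hden0 : lam * ((N : ℝ) - 1) + lam * ((N : ℝ) - 1) ≠ 0 := by nlinarith
  have := hnum.div hden hden0
  have hval : 2 * β * ((N : ℝ) + 1) * lam / (lam * ((N : ℝ) - 1) + lam * ((N : ℝ) - 1))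
      = cLim N β := by
    rw [cLim]
    field_simp
    ring
  rw [hval] at this
  refine this.congr' ?_
  filter_upwards [self_mem_nhdsWithin] with ε hε
  exact (z1_eq hN hlam hβ hε).symm

lemma tendsto_z2_atBot :
    Tendsto (fun ε => z2Eps N lam β ε) (𝓝[>] 0) atBot := by
  have h1 := hNR hN
  have hW : Tendsto (fun ε => (-(lam * ((N : ℝ) - 1)) - DEps N lam β ε) / 2) (𝓝[>] 0)
      (𝓝 (-(lam * ((N : ℝ) - 1)))) := by
    have := ((tendsto_const_nhds (x := -(lam * ((N : ℝ) - 1)))).sub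
      (tendsto_DEps hN hlam hβ)).div_const 2
    convert this using 2
    ring
  have hC : -(lam * ((N : ℝ) - 1)) < 0 := by nlinarith
  have := Filter.Tendsto.neg_mul_atTop hC hW tendsto_inv_nhdsGT_zero
  refine this.congr ?_
  intro ε
  rw [z2Eps, ← div_div, div_eq_mul_inv _ ε]

end


lemma tendsto_ratio_atBot (p q : ℝ) :
    Tendsto (fun x : ℝ => (x + p) / (x + q)) atBot (𝓝 1) := by
  have h1 : Tendsto (fun x : ℝ => x + q) atBot atBot :=
    tendsto_atBot_add_const_right _ q tendsto_id
  have h2' : Tendsto (fun x : ℝ => (x + q)⁻¹) atBot (𝓝 0) := by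
    have := ((tendsto_neg_atBot_atTop.comp h1).inv_tendsto_atTop).neg
    rw [neg_zero] at this
    refine this.congr fun x => ?_
    simp only [Function.comp, Pi.inv_apply]
    rw [inv_neg, neg_neg]
  have h3 : Tendsto (fun x : ℝ => 1 + (p - q) * (x + q)⁻¹) atBot (𝓝 (1 + (p - q) * 0)) :=
    tendsto_const_nhds.add (h2'.const_mul _)
  norm_num at h3
  refine h3.congr' ?_
  filter_upwards [eventually_lt_atBot (-q)] with x hx
  have hx0 : x + q ≠ 0 := by linarith
  field_simp
  ring

variable (N lam β T) in
/-- The limit of `γ₁` as `ε → 0⁺`. -/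
noncomputable def gammaInf : ℝ :=
  1 / (cLim N β + β) + Real.exp (cLim N β * T) / (cLim N β - β)

variable (N lam β T) in
noncomputable def QFun (ε : ℝ) : ℝ :=
  gamma1Eps N lam β T ε / (gamma2Eps N lam β T ε * z2Eps N lam β ε)

include hN hlam hβ

lemma tendsto_gamma1 :
    Tendsto (fun ε => gamma1Eps N lam β T ε) (𝓝[>] 0) (𝓝 (gammaInf N β T)) := by
  have hz1 := tendsto_z1 hN hlam hβ
  have h1 : Tendsto (fun ε => 1 / (z1Eps N lam β ε + β)) (𝓝[>] 0)
      (𝓝 (1 / (cLim N β + β))) :=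
    tendsto_const_nhds.div (hz1.add tendsto_const_nhds) (cLim_add_pos hN hβ).ne'
  have h2 : Tendsto (fun ε => Real.exp (z1Eps N lam β ε * T) / (z1Eps N lam β ε - β)) (𝓝[>] 0)
      (𝓝 (Real.exp (cLim N β * T) / (cLim N β - β))) :=
    ((Real.continuous_exp.tendsto _).comp (hz1.mul_const T)).div
      (hz1.sub tendsto_const_nhds) (cLim_sub_pos hN hβ).ne'
  exact h1.add h2

lemma tendsto_exp_z2 {s : ℝ} (hs : 0 < s) :
    Tendsto (fun ε => Real.exp (z2Eps N lam β ε * s)) (𝓝[>] 0) (𝓝 0) :=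
  Real.tendsto_exp_atBot.comp ((tendsto_z2_atBot hN hlam hβ).atBot_mul_const hs)

lemma tendsto_z2_ratio (q : ℝ) :
    Tendsto (fun ε => z2Eps N lam β ε / (z2Eps N lam β ε + q)) (𝓝[>] 0) (𝓝 1) := by
  have := (tendsto_ratio_atBot 0 q).comp (tendsto_z2_atBot hN hlam hβ)
  simpa [Function.comp_def] using this

include hT

lemma tendsto_gamma2_z2 :
    Tendsto (fun ε => gamma2Eps N lam β T ε * z2Eps N lam β ε) (𝓝[>] 0) (𝓝 1) := by
  have ha := tendsto_z2_ratio hN hlam hβ β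
  have h1 : Tendsto (fun ε => z2Eps N lam β ε / (z2Eps N lam β ε - β)) (𝓝[>] 0) (𝓝 1) := by
    have := tendsto_z2_ratio hN hlam hβ (-β)
    simpa [sub_eq_add_neg] using this
  have hb := h1.mul (tendsto_exp_z2 hN hlam hβ hT)
  have h := ha.add hb
  norm_num at h
  refine h.congr fun ε => ?_
  rw [gamma2Eps]
  ring

lemma tendsto_Q :
    Tendsto (fun ε => QFun N lam β T ε) (𝓝[>] 0) (𝓝 (gammaInf N β T)) := by
  have := (tendsto_gamma1 hN hlam hβ (T := T)).div (tendsto_gamma2_z2 hN hlam hβ hT) one_ne_zero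
  rw [div_one] at this
  exact this

lemma tendsto_rho :
    Tendsto (fun ε => rhoMinusEps N lam β T ε) (𝓝[>] 0)
      (𝓝 (Real.exp (cLim N β * T) / (cLim N β - β))) := by
  have hz1 := tendsto_z1 hN hlam hβ
  have h1 : Tendsto (fun ε => Real.exp (z1Eps N lam β ε * T) / (z1Eps N lam β ε - β)) (𝓝[>] 0)
      (𝓝 (Real.exp (cLim N β * T) / (cLim N β - β))) :=
    ((Real.continuous_exp.tendsto _).comp (hz1.mul_const T)).div
      (hz1.sub tendsto_const_nhds) (cLim_sub_pos hN hβ).ne'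
  have hr : Tendsto (fun ε => z2Eps N lam β ε / (z2Eps N lam β ε - β)) (𝓝[>] 0) (𝓝 1) := by
    have := tendsto_z2_ratio hN hlam hβ (-β)
    simpa [sub_eq_add_neg] using this
  have h2 := ((tendsto_Q hN hlam hβ hT).mul hr).mul (tendsto_exp_z2 hN hlam hβ hT)
  have h := h1.sub h2
  norm_num at h
  refine h.congr' ?_
  filter_upwards [(tendsto_z2_atBot hN hlam hβ).eventually (eventually_lt_atBot 0)] with ε hε
  rw [rhoMinusEps, QFun]
  congr 1
  set g1 := gamma1Eps N lam β T ε
  set g2 := gamma2Eps N lam β T ε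
  set z2 := z2Eps N lam β ε
  set E := Real.exp (z2 * T)
  have key : g1 / (g2 * z2) * (z2 / (z2 - β)) = g1 / g2 * (1 / (z2 - β)) := by
    rcases eq_or_ne g2 0 with h0 | h0
    · simp [h0]
    rcases eq_or_ne (z2 - β) 0 with h2' | h2'
    · simp [h2']
    field_simp [hε.ne]
  calc g1 / (g2 * z2) * (z2 / (z2 - β)) * E = g1 / g2 * (1 / (z2 - β)) * E := by rw [key]
    _ = g1 / g2 * (E / (z2 - β)) := by ring


variable (N lam β T) in
noncomputable def NumFun (ε t : ℝ) : ℝ :=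
  β * rhoMinusEps N lam β T ε * t
    + (Real.exp (z1Eps N lam β ε * t) - 1) / z1Eps N lam β ε
    - gamma1Eps N lam β T ε / gamma2Eps N lam β T ε
      * ((Real.exp (z2Eps N lam β ε * t) - 1) / z2Eps N lam β ε)

variable (N β T) in
noncomputable def LLim (t : ℝ) : ℝ :=
  β * (Real.exp (cLim N β * T) / (cLim N β - β)) * t
    + (Real.exp (cLim N β * t) - 1) / cLim N β + gammaInf N β T

omit hN hlam hβ hT in
lemma NumFun_eq (ε t : ℝ) :
    NumFun N lam β T ε t = β * rhoMinusEps N lam β T ε * t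
      + (Real.exp (z1Eps N lam β ε * t) - 1) / z1Eps N lam β ε
      + QFun N lam β T ε * (1 - Real.exp (z2Eps N lam β ε * t)) := by
  rw [NumFun, QFun]
  ring

lemma tendsto_Num {t : ℝ} (ht : 0 < t) :
    Tendsto (fun ε => NumFun N lam β T ε t) (𝓝[>] 0) (𝓝 (LLim N β T t)) := by
  have hz1 := tendsto_z1 hN hlam hβ
  have hA := ((tendsto_rho hN hlam hβ hT).const_mul β).mul_const t
  have hB : Tendsto (fun ε => (Real.exp (z1Eps N lam β ε * t) - 1) / z1Eps N lam β ε) (𝓝[>] 0)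
      (𝓝 ((Real.exp (cLim N β * t) - 1) / cLim N β)) :=
    (((Real.continuous_exp.tendsto _).comp (hz1.mul_const t)).sub tendsto_const_nhds).div
      hz1 (cLim_pos hN hβ).ne'
  have hC := (tendsto_Q hN hlam hβ hT).mul
    ((tendsto_const_nhds (x := (1:ℝ))).sub (tendsto_exp_z2 hN hlam hβ ht))
  have h := (hA.add hB).add hC
  have hv : β * (Real.exp (cLim N β * T) / (cLim N β - β)) * t
      + (Real.exp (cLim N β * t) - 1) / cLim N β + gammaInf N β T * (1 - 0)
      = LLim N β T t := by
    rw [LLim]; ring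
  rw [hv] at h
  refine h.congr fun ε => (NumFun_eq ε t).symm

omit hlam in
lemma LLim_pos {t : ℝ} (ht : 0 ≤ t) : 0 < LLim N β T t := by
  have hc := cLim_pos hN hβ
  have hcs := cLim_sub_pos hN hβ
  have hca := cLim_add_pos hN hβ
  have h1 : 0 ≤ β * (Real.exp (cLim N β * T) / (cLim N β - β)) * t := by positivity
  have h2 : 0 ≤ (Real.exp (cLim N β * t) - 1) / cLim N β := by
    apply div_nonneg _ hc.le
    have : (1:ℝ) ≤ Real.exp (cLim N β * t) := by
      rw [← Real.exp_zero]
      exact Real.exp_le_exp.2 (by positivity)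
    linarith
  have h3 : 0 < gammaInf N β T := by
    rw [gammaInf]
    positivity
  rw [LLim]
  linarith

omit hlam in
lemma LLim_mono {s t : ℝ} (hst : s ≤ t) : LLim N β T s ≤ LLim N β T t := by
  have hc := cLim_pos hN hβ
  have hcs := cLim_sub_pos hN hβ
  rw [LLim, LLim]
  have h1 : β * (Real.exp (cLim N β * T) / (cLim N β - β)) * s
      ≤ β * (Real.exp (cLim N β * T) / (cLim N β - β)) * t := by
    apply mul_le_mul_of_nonneg_left hst
    positivity
  have h2 : (Real.exp (cLim N β * s) - 1) / cLim N β
      ≤ (Real.exp (cLim N β * t) - 1) / cLim N β := by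
    rw [div_le_div_iff_of_pos_right hc]
    have := mul_le_mul_of_nonneg_left hst hc.le
    exact sub_le_sub_right (Real.exp_le_exp.2 this) 1
  linarith

omit hlam hT in
lemma LLim_key (s : ℝ) :
    (N : ℝ) * (β * s + 1) * ((N : ℝ) + 1) * Real.exp (cLim N β * T)
      + 2 * (N : ℝ) * Real.exp (cLim N β * s) - ((N : ℝ) - 1)
    = 2 * β * (N : ℝ) * ((N : ℝ) + 1) / ((N : ℝ) - 1) * LLim N β T s := by
  have hn := hNR hN
  have h1 : (N : ℝ) - 1 ≠ 0 := by linarith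
  have h2 : β * ((N:ℝ)+1) / ((N:ℝ)-1) - β = 2 * β / ((N:ℝ)-1) := by field_simp; ring
  have h3 : β * ((N:ℝ)+1) / ((N:ℝ)-1) + β = 2 * β * (N:ℝ) / ((N:ℝ)-1) := by field_simp; ring
  rw [LLim, gammaInf, cLim, h2, h3]
  have hb : β ≠ 0 := ne_of_gt hβ
  have hn1 : (N:ℝ) + 1 ≠ 0 := by linarith
  have hnn : (N:ℝ) ≠ 0 := by linarith
  field_simp
  ring

omit hlam in
lemma gBlock_eq (t : ℝ) : gBlock N β T t = 1 - LLim N β T t / LLim N β T T := by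
  have hn := hNR hN
  have hk : 2 * β * (N : ℝ) * ((N : ℝ) + 1) / ((N : ℝ) - 1) ≠ 0 := by
    have h0 : (0:ℝ) < (N : ℝ) - 1 := by linarith
    have h1 : (0:ℝ) < (N : ℝ) := by linarith
    positivity
  have e1 : β * ((N : ℝ) + 1) * T / ((N : ℝ) - 1) = cLim N β * T := by rw [cLim]; ring
  have e2 : β * ((N : ℝ) + 1) * t / ((N : ℝ) - 1) = cLim N β * t := by rw [cLim]; ring
  rw [gBlock, e1, e2]
  congr 1
  have hnum := LLim_key hN hβ (T := T) t
  have hden : (N : ℝ) * ((β * T + 1) * ((N : ℝ) + 1) + 2) * Real.exp (cLim N β * T)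
      - ((N : ℝ) - 1)
      = 2 * β * (N : ℝ) * ((N : ℝ) + 1) / ((N : ℝ) - 1) * LLim N β T T := by
    rw [← LLim_key hN hβ (T := T) T]
    ring
  rw [hnum, hden, mul_div_mul_left _ _ hk]


omit hN hlam hβ hT in
lemma exp_diff_bound {x c t b : ℝ} (hc : 0 < c) (hb : 0 < b) (htb : 0 ≤ t) (htb2 : t ≤ b)
    (hx : |x - c| ≤ b⁻¹) :
    |Real.exp (x * t) - Real.exp (c * t)| ≤ Real.exp (c * b) * (2 * b * |x - c|) := by
  have h1 : x * t = c * t + (x - c) * t := by ring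
  rw [h1, Real.exp_add, show Real.exp (c*t) * Real.exp ((x-c)*t) - Real.exp (c*t)
    = Real.exp (c*t) * (Real.exp ((x-c)*t) - 1) by ring, abs_mul,
    abs_of_pos (Real.exp_pos _)]
  have harg : |(x - c) * t| ≤ 1 := by
    rw [abs_mul, abs_of_nonneg htb]
    calc |x - c| * t ≤ b⁻¹ * b := by
          apply mul_le_mul hx htb2 htb (by positivity)
      _ = 1 := by field_simp
  have h2 : |Real.exp ((x - c) * t) - 1| ≤ 2 * |(x - c) * t| := Real.abs_exp_sub_one_le harg
  have h3 : Real.exp (c * t) ≤ Real.exp (c * b) :=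
    Real.exp_le_exp.2 (mul_le_mul_of_nonneg_left htb2 hc.le)
  calc Real.exp (c*t) * |Real.exp ((x-c)*t) - 1| ≤ Real.exp (c*b) * (2 * |(x-c)*t|) :=
        mul_le_mul h3 h2 (abs_nonneg _) (Real.exp_pos _).le
    _ ≤ Real.exp (c*b) * (2 * b * |x - c|) := by
        rw [abs_mul, abs_of_nonneg htb]
        have h4 : 2 * (|x - c| * t) ≤ 2 * (b * |x-c|) := by
          nlinarith [abs_nonneg (x - c), htb2]
        nlinarith [Real.exp_pos (c*b), h4]

variable (N lam β T) in
noncomputable def BFun (a b ε : ℝ) : ℝ :=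
  |β * rhoMinusEps N lam β T ε - β * (Real.exp (cLim N β * T) / (cLim N β - β))| * b
    + |(z1Eps N lam β ε)⁻¹ - (cLim N β)⁻¹| * (Real.exp ((cLim N β + 1) * b) + 1)
    + (cLim N β)⁻¹ * Real.exp (cLim N β * b) * (2 * b) * |z1Eps N lam β ε - cLim N β|
    + |QFun N lam β T ε - gammaInf N β T|
    + |QFun N lam β T ε| * Real.exp (z2Eps N lam β ε * a)

omit hlam hT in
lemma Num_bound {ε t a b : ℝ} (ha : 0 < a) (hat : a ≤ t) (htb : t ≤ b)
    (hz2 : z2Eps N lam β ε < 0) (hz1p : 0 < z1Eps N lam β ε)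
    (hz1u : z1Eps N lam β ε ≤ cLim N β + 1)
    (hz1c : |z1Eps N lam β ε - cLim N β| ≤ b⁻¹) :
    |NumFun N lam β T ε t - LLim N β T t| ≤ BFun N lam β T a b ε := by
  have hc := cLim_pos hN hβ
  have hb : 0 < b := lt_of_lt_of_le (lt_of_lt_of_le ha hat) htb
  have ht0 : 0 < t := lt_of_lt_of_le ha hat
  set z1 := z1Eps N lam β ε
  set z2 := z2Eps N lam β ε
  set c := cLim N β
  set Q := QFun N lam β T ε
  set γ := gammaInf N β T
  set A0 := β * (Real.exp (c * T) / (c - β))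
  have hdecomp : NumFun N lam β T ε t - LLim N β T t
      = (β * rhoMinusEps N lam β T ε - A0) * t
        + (((z1)⁻¹ - (c)⁻¹) * (Real.exp (z1 * t) - 1)
            + (c)⁻¹ * (Real.exp (z1 * t) - Real.exp (c * t)))
        + ((Q - γ) - Q * Real.exp (z2 * t)) := by
    rw [NumFun_eq, LLim]
    ring
  rw [hdecomp, BFun]
  have T1 : |(β * rhoMinusEps N lam β T ε - A0) * t| ≤ |β * rhoMinusEps N lam β T ε - A0| * b := by
    rw [abs_mul, abs_of_pos ht0]
    exact mul_le_mul_of_nonneg_left htb (abs_nonneg _)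
  have T2a : |((z1)⁻¹ - (c)⁻¹) * (Real.exp (z1 * t) - 1)|
      ≤ |(z1)⁻¹ - (c)⁻¹| * (Real.exp ((c + 1) * b) + 1) := by
    rw [abs_mul]
    apply mul_le_mul_of_nonneg_left _ (abs_nonneg _)
    have h1 : Real.exp (z1 * t) ≤ Real.exp ((c + 1) * b) := by
      apply Real.exp_le_exp.2
      calc z1 * t ≤ z1 * b := mul_le_mul_of_nonneg_left htb hz1p.le
        _ ≤ (c + 1) * b := mul_le_mul_of_nonneg_right hz1u hb.le
    rw [abs_sub_comm, abs_sub_le_iff]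
    constructor
    · nlinarith [Real.exp_pos (z1 * t)]
    · nlinarith [Real.exp_pos (z1 * t), Real.exp_pos ((c+1)*b)]
  have T2b : |(c)⁻¹ * (Real.exp (z1 * t) - Real.exp (c * t))|
      ≤ (c)⁻¹ * Real.exp (c * b) * (2 * b) * |z1 - c| := by
    rw [abs_mul, abs_of_pos (by positivity : (0:ℝ) < (c)⁻¹)]
    have := exp_diff_bound (x := z1) hc hb ht0.le htb hz1c
    calc (c)⁻¹ * |Real.exp (z1 * t) - Real.exp (c * t)|
        ≤ (c)⁻¹ * (Real.exp (c * b) * (2 * b * |z1 - c|)) :=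
          mul_le_mul_of_nonneg_left this (by positivity)
      _ = (c)⁻¹ * Real.exp (c * b) * (2 * b) * |z1 - c| := by ring
  have T3 : |(Q - γ) - Q * Real.exp (z2 * t)| ≤ |Q - γ| + |Q| * Real.exp (z2 * a) := by
    have h1 : |Q * Real.exp (z2 * t)| ≤ |Q| * Real.exp (z2 * a) := by
      rw [abs_mul, abs_of_pos (Real.exp_pos _)]
      apply mul_le_mul_of_nonneg_left _ (abs_nonneg _)
      apply Real.exp_le_exp.2
      exact mul_le_mul_of_nonpos_left hat hz2.le
    calc |(Q - γ) - Q * Real.exp (z2 * t)| ≤ |Q - γ| + |Q * Real.exp (z2 * t)| := abs_sub (Q - γ) (Q * Real.exp (z2 * t))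
      _ ≤ |Q - γ| + |Q| * Real.exp (z2 * a) := by linarith
  calc |(β * rhoMinusEps N lam β T ε - A0) * t
        + (((z1)⁻¹ - (c)⁻¹) * (Real.exp (z1 * t) - 1)
            + (c)⁻¹ * (Real.exp (z1 * t) - Real.exp (c * t)))
        + ((Q - γ) - Q * Real.exp (z2 * t))|
      ≤ |(β * rhoMinusEps N lam β T ε - A0) * t|
        + (|((z1)⁻¹ - (c)⁻¹) * (Real.exp (z1 * t) - 1)|
            + |(c)⁻¹ * (Real.exp (z1 * t) - Real.exp (c * t))|)
        + |(Q - γ) - Q * Real.exp (z2 * t)| := by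
        exact (abs_add_le _ _).trans (add_le_add ((abs_add_le _ _).trans (add_le_add le_rfl (abs_add_le _ _))) le_rfl)
    _ ≤ _ := by linarith

end Aux

/-- As `ε → 0⁺`, `𝔤^ε(t) → 𝕘(t)` pointwise on `(0,T]`, `𝔤^ε(0) = 1` for every `ε > 0`,
and the convergence is uniform on compact subsets of `(0,T)`. -/
theorem gMean_small_eps_limit (N : ℕ) (hN : 2 ≤ N) (lam β T : ℝ)
    (hlam : 0 < lam) (hβ : 0 < β) (hT : 0 < T) :
    (∀ t ∈ Set.Ioc (0 : ℝ) T,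
      Tendsto (fun ε : ℝ => gMean N lam β T ε t) (𝓝[>] 0) (𝓝 (gBlock N β T t))) ∧
    (∀ ε : ℝ, 0 < ε → gMean N lam β T ε 0 = 1) ∧
    (∀ K : Set ℝ, K ⊆ Set.Ioo 0 T → IsCompact K →
      TendstoUniformlyOn (fun ε t => gMean N lam β T ε t) (gBlock N β T) (𝓝[>] 0) K) := by
  have hc := cLim_pos hN hβ
  have hLT : 0 < LLim N β T T := LLim_pos hN hβ hT (le_of_lt hT)
  have hgm : ∀ ε t, gMean N lam β T ε t
      = 1 - NumFun N lam β T ε t / NumFun N lam β T ε T := fun _ _ => rfl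
  have hDenT := tendsto_Num hN hlam hβ hT hT
  refine ⟨fun t ht => ?_, fun ε hε => ?_, fun K hK hKc => ?_⟩
  · have h := (tendsto_Num hN hlam hβ hT ht.1).div hDenT hLT.ne'
    have h2 := (tendsto_const_nhds (x := (1:ℝ))).sub h
    rw [gBlock_eq hN hβ hT t]
    exact h2.congr fun ε => (hgm ε t).symm
  · simp [gMean, Real.exp_zero]
  · rcases Set.eq_empty_or_nonempty K with rfl | hne
    · exact tendstoUniformlyOn_empty
    have hbb := hKc.bddBelow
    have hba := hKc.bddAbove
    set a := sInf K with ha_def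
    set b := sSup K with hb_def
    have haK : a ∈ K := hKc.sInf_mem hne
    have hbK : b ∈ K := hKc.sSup_mem hne
    have ha : 0 < a := (hK haK).1
    have hbT' : b < T := (hK hbK).2
    have hsub : K ⊆ Set.Icc a b := fun x hx => ⟨csInf_le hbb hx, le_csSup hba hx⟩
    have hab : a ≤ b := csInf_le hbb hbK
    have hb0 : 0 < b := lt_of_lt_of_le ha hab
    -- eventual facts
    have hz2ev : ∀ᶠ ε in 𝓝[>] (0:ℝ), z2Eps N lam β ε < 0 :=
      (tendsto_z2_atBot hN hlam hβ).eventually (eventually_lt_atBot 0)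
    have hδ0 : 0 < min b⁻¹ (min 1 (cLim N β)) := by positivity
    have hz1ev : ∀ᶠ ε in 𝓝[>] (0:ℝ),
        |z1Eps N lam β ε - cLim N β| < min b⁻¹ (min 1 (cLim N β)) := by
      have := Metric.tendsto_nhds.1 (tendsto_z1 hN hlam hβ) _ hδ0
      simpa [Real.dist_eq] using this
    have hDenev : ∀ᶠ ε in 𝓝[>] (0:ℝ), LLim N β T T / 2 ≤ NumFun N lam β T ε T := by
      have := Metric.tendsto_nhds.1 hDenT _ (half_pos hLT)
      filter_upwards [this] with ε hd
      rw [Real.dist_eq] at hd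
      have := abs_lt.1 hd
      linarith [this.1]
    set B' : ℝ → ℝ := fun ε =>
      (LLim N β T T * |NumFun N lam β T ε T - LLim N β T T|
        + LLim N β T T * BFun N lam β T a b ε) / ((LLim N β T T) ^ 2 / 2) with hB'def
    have hB'0 : Tendsto B' (𝓝[>] (0:ℝ)) (𝓝 0) := by
      have habs : Tendsto (fun ε => |NumFun N lam β T ε T - LLim N β T T|) (𝓝[>] (0:ℝ)) (𝓝 0) := by
        have := (hDenT.sub (tendsto_const_nhds (x := LLim N β T T))).abs
        simpa using this
      have h1 : Tendsto (fun ε =>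
          |β * rhoMinusEps N lam β T ε - β * (Real.exp (cLim N β * T) / (cLim N β - β))|)
          (𝓝[>] (0:ℝ)) (𝓝 0) := by
        have := (((tendsto_rho hN hlam hβ hT).const_mul β).sub
          (tendsto_const_nhds (x := β * (Real.exp (cLim N β * T) / (cLim N β - β))))).abs
        simpa using this
      have h2 : Tendsto (fun ε => |(z1Eps N lam β ε)⁻¹ - (cLim N β)⁻¹|) (𝓝[>] (0:ℝ)) (𝓝 0) := by
        have := (((tendsto_z1 hN hlam hβ).inv₀ hc.ne').sub
          (tendsto_const_nhds (x := (cLim N β)⁻¹))).abs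
        simpa using this
      have h3 : Tendsto (fun ε => |z1Eps N lam β ε - cLim N β|) (𝓝[>] (0:ℝ)) (𝓝 0) := by
        have := ((tendsto_z1 hN hlam hβ).sub (tendsto_const_nhds (x := cLim N β))).abs
        simpa using this
      have h4 : Tendsto (fun ε => |QFun N lam β T ε - gammaInf N β T|) (𝓝[>] (0:ℝ)) (𝓝 0) := by
        have := ((tendsto_Q hN hlam hβ hT).sub (tendsto_const_nhds (x := gammaInf N β T))).abs
        simpa using this
      have h5 : Tendsto (fun ε => |QFun N lam β T ε| * Real.exp (z2Eps N lam β ε * a))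
          (𝓝[>] (0:ℝ)) (𝓝 (|gammaInf N β T| * 0)) :=
        ((tendsto_Q hN hlam hβ hT).abs).mul (tendsto_exp_z2 hN hlam hβ ha)
      have hB0 : Tendsto (fun ε => BFun N lam β T a b ε) (𝓝[>] (0:ℝ)) (𝓝 0) := by
        have hsum := ((((h1.mul_const b).add
          (h2.mul_const (Real.exp ((cLim N β + 1) * b) + 1))).add
          (h3.const_mul ((cLim N β)⁻¹ * Real.exp (cLim N β * b) * (2 * b)))).add h4).add h5
        have h0 : (0:ℝ) * b + 0 * (Real.exp ((cLim N β + 1) * b) + 1)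
            + (cLim N β)⁻¹ * Real.exp (cLim N β * b) * (2 * b) * 0 + 0
            + |gammaInf N β T| * 0 = 0 := by ring
        rw [h0] at hsum
        exact hsum.congr fun ε => by rw [BFun]
      rw [hB'def]
      have := ((habs.const_mul (LLim N β T T)).add (hB0.const_mul (LLim N β T T))).div_const
        ((LLim N β T T) ^ 2 / 2)
      simpa using this
    rw [Metric.tendstoUniformlyOn_iff]
    intro δ hδpos
    have hB'small : ∀ᶠ ε in 𝓝[>] (0:ℝ), B' ε < δ := by
      have := Metric.tendsto_nhds.1 hB'0 δ hδpos
      filter_upwards [this] with ε h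
      rw [Real.dist_eq, sub_zero] at h
      exact lt_of_abs_lt h
    filter_upwards [hz2ev, hz1ev, hDenev, hB'small] with ε h2 h1 hden hsmall
    intro t htK
    obtain ⟨hat, htb⟩ := hsub htK
    have ht0 : 0 < t := lt_of_lt_of_le ha hat
    have hz1c : |z1Eps N lam β ε - cLim N β| ≤ b⁻¹ := (lt_of_lt_of_le h1 (min_le_left _ _)).le
    have hz1lt := abs_lt.1 h1
    have hz1u : z1Eps N lam β ε ≤ cLim N β + 1 := by
      have h' := lt_of_lt_of_le h1 ((min_le_right _ _).trans (min_le_left _ _))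
      have := (abs_lt.1 h').2
      linarith
    have hz1p : 0 < z1Eps N lam β ε := by
      have h' := lt_of_lt_of_le h1 ((min_le_right _ _).trans (min_le_right _ _))
      have := (abs_lt.1 h').1
      linarith
    have hNb := Num_bound (T := T) hN hβ ha hat htb h2 hz1p hz1u hz1c
    have hDpos : 0 < NumFun N lam β T ε T := lt_of_lt_of_le (half_pos hLT) hden
    have hLt_pos : 0 < LLim N β T t := LLim_pos hN hβ hT ht0.le
    have hLt_le : LLim N β T t ≤ LLim N β T T := LLim_mono hN hβ hT (htb.trans hbT'.le)
    rw [Real.dist_eq, gBlock_eq hN hβ hT t, hgm]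
    have heq : (1 - LLim N β T t / LLim N β T T)
        - (1 - NumFun N lam β T ε t / NumFun N lam β T ε T)
        = (NumFun N lam β T ε t * LLim N β T T - LLim N β T t * NumFun N lam β T ε T)
          / (NumFun N lam β T ε T * LLim N β T T) := by
      field_simp
      ring
    rw [heq, abs_div, abs_of_pos (mul_pos hDpos hLT)]
    have hnum_le : |NumFun N lam β T ε t * LLim N β T T - LLim N β T t * NumFun N lam β T ε T|
        ≤ LLim N β T T * |NumFun N lam β T ε T - LLim N β T T|
          + LLim N β T T * BFun N lam β T a b ε := by
      have hid : NumFun N lam β T ε t * LLim N β T T - LLim N β T t * NumFun N lam β T ε T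
          = (NumFun N lam β T ε t - LLim N β T t) * LLim N β T T
            - LLim N β T t * (NumFun N lam β T ε T - LLim N β T T) := by ring
      rw [hid]
      calc |(NumFun N lam β T ε t - LLim N β T t) * LLim N β T T
            - LLim N β T t * (NumFun N lam β T ε T - LLim N β T T)|
          ≤ |(NumFun N lam β T ε t - LLim N β T t) * LLim N β T T|
            + |LLim N β T t * (NumFun N lam β T ε T - LLim N β T T)| := abs_sub _ _
        _ ≤ LLim N β T T * BFun N lam β T a b ε
            + LLim N β T T * |NumFun N lam β T ε T - LLim N β T T| := by
            rw [abs_mul, abs_mul, abs_of_pos hLT, abs_of_pos hLt_pos]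
            have e1 : |NumFun N lam β T ε t - LLim N β T t| * LLim N β T T
                ≤ LLim N β T T * BFun N lam β T a b ε := by
              rw [mul_comm]
              exact mul_le_mul_of_nonneg_left hNb hLT.le
            have e2 : LLim N β T t * |NumFun N lam β T ε T - LLim N β T T|
                ≤ LLim N β T T * |NumFun N lam β T ε T - LLim N β T T| :=
              mul_le_mul_of_nonneg_right hLt_le (abs_nonneg _)
            linarith
        _ = _ := by ring
    have hden2 : (LLim N β T T) ^ 2 / 2 ≤ NumFun N lam β T ε T * LLim N β T T := by
      have := mul_le_mul_of_nonneg_right hden hLT.le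
      calc (LLim N β T T) ^ 2 / 2 = LLim N β T T / 2 * LLim N β T T := by ring
        _ ≤ NumFun N lam β T ε T * LLim N β T T := this
    have hfinal : |NumFun N lam β T ε t * LLim N β T T - LLim N β T t * NumFun N lam β T ε T|
          / (NumFun N lam β T ε T * LLim N β T T) ≤ B' ε := by
      rw [hB'def]
      exact div_le_div₀ ((abs_nonneg _).trans hnum_le) hnum_le (half_pos (pow_pos hLT 2)) hden2
    exact lt_of_le_of_lt hfinal hsmall
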